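/- The set of E′-valid formulas properly extends intuitionistic propositional logic: every intuitionistically valid formula is E′-valid, every instance ¬¬p → p of the stability scheme for an atom p is E′-valid, and ¬¬p → p is not intuitionistically valid. -/

import Mathlib

/- Formalization of Lorenzen dialogue games, following Felscher's presentation.

   Propositional formulas are built from atoms using ¬, ∧, ∨, →.  A dialogue
   for a formula φ is a sequence of moves beginning with Proponent (P)
   asserting φ at position 0, with O moving at odd positions and P at even
   positions.  Each later move attacks or defends an earlier move of the other
   player, according to the particle rules.  Structural rules (D10, D11, D12,
   D13, E, and the variants D10*, D10′) constrain dialogues further.  P wins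
   if P made the last move and no moves are available to O; φ is S-valid if P
   has an S-winning strategy for φ. -/

namespace LorenzenDialogues

/-- Propositional formulas: atoms, ¬, ∧, ∨, →. -/
inductive Formula : Type
  | atom : ℕ → Formula
  | neg  : Formula → Formula
  | and  : Formula → Formula → Formula
  | or   : Formula → Formula → Formula
  | imp  : Formula → Formula → Formula
deriving DecidableEq

/-- Statements: formulas together with the symbolic attacks `?`, `∧_L`, `∧_R`. -/
inductive Statement : Type
  | form  : Formula → Statement
  | qmark : Statement
  | andL  : Statement
  | andR  : Statement
deriving DecidableEq

/-- Particle rules, attack part: which statements attack which formulas. -/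
inductive Attacks : Statement → Formula → Prop
  | andL (a b : Formula) : Attacks .andL (.and a b)
  | andR (a b : Formula) : Attacks .andR (.and a b)
  | qmark (a b : Formula) : Attacks .qmark (.or a b)
  | imp (a b : Formula) : Attacks (.form a) (.imp a b)
  | neg (a : Formula) : Attacks (.form a) (.neg a)

/-- Particle rules, defense part: `Defends χ a s` means `s` is a permitted
    defense of the formula `χ` against the attack `a`.  (A negation admits
    no defense.) -/
inductive Defends : Formula → Statement → Statement → Prop
  | andL (a b : Formula) : Defends (.and a b) .andL (.form a)
  | andR (a b : Formula) : Defends (.and a b) .andR (.form b)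
  | orL (a b : Formula) : Defends (.or a b) .qmark (.form a)
  | orR (a b : Formula) : Defends (.or a b) .qmark (.form b)
  | imp (a b : Formula) : Defends (.imp a b) (.form a) (.form b)

/-- A move: a statement, a flag recording whether it is an attack (`true`)
    or a defense (`false`), and the position of the earlier move it attacks,
    resp. the earlier attack it defends against. -/
structure Move : Type where
  statement : Statement
  isAttack : Bool
  ref : ℕ
deriving DecidableEq

/-- A dialogue: the initial formula asserted by P at position 0, followed by
    the list of later moves (the move at list index `i` occupies position
    `i + 1`; O moves at odd positions, P at even positions). -/
structure Dialogue : Type where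
  initial : Formula
  moves : List Move

/-- The statement asserted at position `n` (if any). -/
def Dialogue.stmtAt (d : Dialogue) (n : ℕ) : Option Statement :=
  if n = 0 then some (.form d.initial) else (d.moves[n - 1]?).map Move.statement

/-- The move at position `n ≥ 1` (if any); position 0 is the initial assertion,
    not a move. -/
def Dialogue.moveAt (d : Dialogue) (n : ℕ) : Option Move :=
  if n = 0 then none else d.moves[n - 1]?

/-- The move `m`, played at position `n ≥ 1`, is permitted by the particle
    rules: it refers to an earlier position of the other player; if it is an
    attack, it attacks a formula asserted there, and if it is a defense, it
    responds to an attack played there, as the particle rules prescribe. -/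
def MoveOK (d : Dialogue) (n : ℕ) (m : Move) : Prop :=
  m.ref < n ∧ m.ref % 2 ≠ n % 2 ∧
    (m.isAttack = true →
      ∃ ψ, d.stmtAt m.ref = some (.form ψ) ∧ Attacks m.statement ψ) ∧
    (m.isAttack = false →
      ∃ a χ, d.moveAt m.ref = some a ∧ a.isAttack = true ∧
        d.stmtAt a.ref = some (.form χ) ∧ Defends χ a.statement m.statement)

/-- The dialogue adheres to the particle rules (every move is legal). -/
def ParticleOK (d : Dialogue) : Prop :=
  ∀ i m, d.moves[i]? = some m → MoveOK d (i + 1) m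

/-- Position `n` carries a defense of the attack made at position `r`. -/
def IsDefenseOf (d : Dialogue) (n r : ℕ) : Prop :=
  ∃ m, d.moveAt n = some m ∧ m.isAttack = false ∧ m.ref = r

/-- Position `n` carries an attack on the assertion made at position `r`. -/
def IsAttackOn (d : Dialogue) (n r : ℕ) : Prop :=
  ∃ m, d.moveAt n = some m ∧ m.isAttack = true ∧ m.ref = r

/-- Position `n` carries an attack. -/
def IsAttackPos (d : Dialogue) (n : ℕ) : Prop :=
  ∃ m, d.moveAt n = some m ∧ m.isAttack = true

/-- The attack at position `r` is still open (no defense against it has yet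
    been played) before position `k`. -/
def OpenAt (d : Dialogue) (r k : ℕ) : Prop :=
  IsAttackPos d r ∧ ¬ ∃ j, j < k ∧ IsDefenseOf d j r

/-- (D10) P may assert an atomic formula only after it has been asserted by O
    before. -/
def D10 (d : Dialogue) : Prop :=
  ∀ n p, n % 2 = 0 → d.stmtAt n = some (.form (.atom p)) →
    ∃ j, j < n ∧ j % 2 = 1 ∧ d.stmtAt j = some (.form (.atom p))

/-- (D10*) P may assert an atom `p` only if O has asserted `p` or `¬p`
    before. -/
def D10star (d : Dialogue) : Prop :=
  ∀ n p, n % 2 = 0 → d.stmtAt n = some (.form (.atom p)) →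
    ∃ j, j < n ∧ j % 2 = 1 ∧
      (d.stmtAt j = some (.form (.atom p)) ∨
        d.stmtAt j = some (.form (.neg (.atom p))))

/-- (D10′) P may assert an atom `p` only if O has asserted `p` or `¬¬p`
    before. -/
def D10prime (d : Dialogue) : Prop :=
  ∀ n p, n % 2 = 0 → d.stmtAt n = some (.form (.atom p)) →
    ∃ j, j < n ∧ j % 2 = 1 ∧
      (d.stmtAt j = some (.form (.atom p)) ∨
        d.stmtAt j = some (.form (.neg (.neg (.atom p)))))

/-- (D11) When defending, only the most recent open attack may be responded
    to: the attack defended against is open, and no strictly more recent open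
    attack (against the same player) exists. -/
def D11 (d : Dialogue) : Prop :=
  ∀ n r, IsDefenseOf d n r →
    OpenAt d r n ∧ ¬ ∃ r', r < r' ∧ r' < n ∧ r' % 2 = r % 2 ∧ OpenAt d r' n

/-- (D12) An attack may be answered at most once. -/
def D12 (d : Dialogue) : Prop :=
  ∀ n₁ n₂ r, IsDefenseOf d n₁ r → IsDefenseOf d n₂ r → n₁ = n₂

/-- (D13) A P-assertion (made at an even position) may be attacked at most
    once. -/
def D13 (d : Dialogue) : Prop :=
  ∀ n₁ n₂ r, r % 2 = 0 → IsAttackOn d n₁ r → IsAttackOn d n₂ r → n₁ = n₂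

/-- (E) O can react only upon the immediately preceding P-statement. -/
def ERule (d : Dialogue) : Prop :=
  ∀ n m, n % 2 = 1 → d.moveAt n = some m → m.ref = n - 1

/-- A ruleset is a set of structural rules, i.e. a predicate on dialogues. -/
def Ruleset := Dialogue → Prop

/-- Ruleset D = {D10, D11, D12, D13}. -/
def rulesetD : Ruleset := fun d => D10 d ∧ D11 d ∧ D12 d ∧ D13 d

/-- Ruleset E = D ∪ {E}. -/
def rulesetE : Ruleset := fun d => rulesetD d ∧ ERule d

/-- Ruleset CL = E − {D11, D12} = {D10, D13, E}. -/
def rulesetCL : Ruleset := fun d => D10 d ∧ D13 d ∧ ERule d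

/-- Ruleset N = D − {D11, D12} = {D10, D13}. -/
def rulesetN : Ruleset := fun d => D10 d ∧ D13 d

/-- Ruleset E* = {D10*, D11, D12, D13, E}. -/
def rulesetEstar : Ruleset :=
  fun d => D10star d ∧ D11 d ∧ D12 d ∧ D13 d ∧ ERule d

/-- Ruleset E′ = {D10′, D11, D12, D13, E}. -/
def rulesetEprime : Ruleset :=
  fun d => D10prime d ∧ D11 d ∧ D12 d ∧ D13 d ∧ ERule d

/-- An S-dialogue: a dialogue adhering to the particle rules and to the
    structural rules S. -/
def Legal (S : Ruleset) (d : Dialogue) : Prop := ParticleOK d ∧ S d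

/-- Extend a dialogue by one move. -/
def Dialogue.extend (d : Dialogue) (m : Move) : Dialogue :=
  ⟨d.initial, d.moves ++ [m]⟩

/-- The position about to be played. -/
def nextPos (d : Dialogue) : ℕ := d.moves.length + 1

/-- It is P's turn (the next position is even). -/
def PTurn (d : Dialogue) : Prop := nextPos d % 2 = 0

/-- The move `m` legally extends the S-dialogue `d`. -/
def LegalExt (S : Ruleset) (d : Dialogue) (m : Move) : Prop :=
  Legal S (d.extend m)

/-- `PWinningC S C d` holds when P, moving under the additional constraint
    `C` on P's own choices, has a winning strategy in the S-dialogue game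
    continuing the dialogue `d`: at P's turn, P has a legal move (satisfying
    `C`) after which P is still winning; at O's turn, every legal O-move
    leads to a position where P is winning (in particular, if no O-move is
    available, P has won: P made the last move and O cannot move). -/
inductive PWinningC (S : Ruleset) (C : Dialogue → Move → Prop) : Dialogue → Prop
  | pMove (d : Dialogue) (m : Move) (hturn : PTurn d)
      (hm : LegalExt S d m) (hC : C d m)
      (h : PWinningC S C (d.extend m)) : PWinningC S C d
  | oMoves (d : Dialogue) (hturn : ¬ PTurn d)
      (h : ∀ m, LegalExt S d m → PWinningC S C (d.extend m)) :
      PWinningC S C d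

/-- P has a winning strategy continuing the S-dialogue `d`. -/
def PWinning (S : Ruleset) (d : Dialogue) : Prop :=
  PWinningC S (fun _ _ => True) d

/-- `valid S φ` (written `⊨_S φ`): the opening assertion of φ is itself a
    legal S-dialogue and P has an S-winning strategy for φ. -/
def valid (S : Ruleset) (φ : Formula) : Prop :=
  Legal S ⟨φ, []⟩ ∧ PWinning S ⟨φ, []⟩

/-- Derivability in intuitionistic propositional logic (a Hilbert-style
    axiomatization with modus ponens). -/
inductive IProv : Formula → Prop
  | k (a b : Formula) : IProv (.imp a (.imp b a))
  | s (a b c : Formula) :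
      IProv (.imp (.imp a (.imp b c)) (.imp (.imp a b) (.imp a c)))
  | andE1 (a b : Formula) : IProv (.imp (.and a b) a)
  | andE2 (a b : Formula) : IProv (.imp (.and a b) b)
  | andI (a b : Formula) : IProv (.imp a (.imp b (.and a b)))
  | orI1 (a b : Formula) : IProv (.imp a (.or a b))
  | orI2 (a b : Formula) : IProv (.imp b (.or a b))
  | orE (a b c : Formula) :
      IProv (.imp (.imp a c) (.imp (.imp b c) (.imp (.or a b) c)))
  | negI (a b : Formula) :
      IProv (.imp (.imp a b) (.imp (.imp a (.neg b)) (.neg a)))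
  | negE (a b : Formula) : IProv (.imp (.neg a) (.imp a b))
  | mp (a b : Formula) : IProv (.imp a b) → IProv a → IProv b

/-- The stability principle ¬¬p → p for the atom `p`. -/
def stab (p : ℕ) : Formula := .imp (.neg (.neg (.atom p))) (.atom p)

/-- Stable logic: intuitionistic propositional logic plus all instances of
    the stability scheme ¬¬p → p for atoms p, closed under modus ponens. -/
inductive StableProv : Formula → Prop
  | intuit (a : Formula) : IProv a → StableProv a
  | stab (p : ℕ) : StableProv (stab p)
  | mp (a b : Formula) : StableProv (.imp a b) → StableProv a → StableProv b

/-- Boolean evaluation of a formula under a valuation of its atoms. -/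
def Formula.eval (v : ℕ → Bool) : Formula → Bool
  | .atom p => v p
  | .neg a => !(a.eval v)
  | .and a b => a.eval v && b.eval v
  | .or a b => a.eval v || b.eval v
  | .imp a b => !(a.eval v) || b.eval v

/-- A classical tautology: true under every Boolean valuation. -/
def Tautology (φ : Formula) : Prop := ∀ v, φ.eval v = true

/-- Uniform substitution of formulas for atoms, applied homomorphically. -/
def Formula.subst (σ : ℕ → Formula) : Formula → Formula
  | .atom p => σ p
  | .neg a => .neg (a.subst σ)
  | .and a b => .and (a.subst σ) (b.subst σ)
  | .or a b => .or (a.subst σ) (b.subst σ)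
  | .imp a b => .imp (a.subst σ) (b.subst σ)

/-- The atoms occurring in a formula. -/
def Formula.atoms : Formula → List ℕ
  | .atom p => [p]
  | .neg a => a.atoms
  | .and a b => a.atoms ++ b.atoms
  | .or a b => a.atoms ++ b.atoms
  | .imp a b => a.atoms ++ b.atoms

/-- Conjunction of a nonempty list of formulas. -/
def conjList (f : Formula) : List Formula → Formula
  | [] => f
  | g :: gs => .and f (conjList g gs)

/-- The conjunction (¬¬p → p) ∧ … of stability instances for the atoms
    `p :: ps`. -/
def stabConj (p : ℕ) (ps : List ℕ) : Formula :=
  conjList (stab p) (ps.map stab)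

/-!
P's winning strategies under E′ are captured by a cut-free sequent-style calculus `Wins ax Γ J`:
`Γ` collects formulas O has asserted, and `J` is either an assertion `δ` of P awaiting O's attacks,
or an open O-attack `s` on P's assertion `χ` that P must deal with, by defending against it or by
first attacking one of O's formulas. Rule E makes O react to P's last move and D11 lets P answer
only the latest open O-attack, so a derivation translates move by move into a winning strategy.
The side condition `ax` on atoms is D10 (`p ∈ Γ`) or D10′ (`p ∈ Γ` or `¬¬p ∈ Γ`).

With D10 the calculus admits cut (by induction on the cut formula; the identity is the copy-cat
strategy), so it is closed under modus ponens and contains intuitionistic logic; a D10 derivation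
is a D10′ derivation. Under D10′, P wins `¬¬p → p` by asserting `p` as soon as O has asserted `¬¬p`.
Finally `¬¬p → p` fails in the three-element Gödel algebra, which validates intuitionistic logic.
-/

/-! ### Gödel semantics -/

def godelImp (x y : Fin 3) : Fin 3 := if x ≤ y then 2 else y

def godelEval (v : ℕ → Fin 3) : Formula → Fin 3
  | .atom p => v p
  | .neg a => godelImp (godelEval v a) 0
  | .and a b => min (godelEval v a) (godelEval v b)
  | .or a b => max (godelEval v a) (godelEval v b)
  | .imp a b => godelImp (godelEval v a) (godelEval v b)

theorem IProv.godelEval_eq_two {φ : Formula} (h : IProv φ) (v : ℕ → Fin 3) :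
    godelEval v φ = 2 := by
  induction h with
  | mp a b _ _ ihab iha =>
    simp only [godelEval, iha] at ihab
    revert ihab
    generalize godelEval v b = y
    revert y
    decide
  | s a b c | orE a b c =>
    simp only [godelEval]
    generalize godelEval v a = x, godelEval v b = y, godelEval v c = z
    revert x y z
    decide
  | k a b | andE1 a b | andE2 a b | andI a b | orI1 a b | orI2 a b | negI a b | negE a b =>
    simp only [godelEval]
    generalize godelEval v a = x, godelEval v b = y
    revert x y
    decide

theorem not_IProv_stab (p : ℕ) : ¬ IProv (stab p) := by
  intro h
  simpa [stab, godelEval, godelImp] using h.godelEval_eq_two (fun _ => 1)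

/-! ### A calculus of dialogue strategies -/

/-- `underAttack χ s`: P is to move and may answer the open O-attack `s` on its assertion `χ`;
`asserted δ`: P has just asserted `δ` and O is to move. -/
inductive Position : Type
  | underAttack (χ : Formula) (s : Statement)
  | asserted (δ : Formula)

def Statement.addTo : Statement → Set Formula → Set Formula
  | .form a, Γ => insert a Γ
  | _, Γ => Γ

theorem Statement.addTo_mono (s : Statement) {Γ Γ' : Set Formula} (h : Γ ⊆ Γ') :
    s.addTo Γ ⊆ s.addTo Γ' := by
  cases s
  case form a => exact Set.insert_subset_insert h
  all_goals exact h

theorem Statement.addTo_insert (s : Statement) (a : Formula) (Γ : Set Formula) :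
    s.addTo (insert a Γ) = insert a (s.addTo Γ) := by
  cases s
  case form b => exact Set.insert_comm b a Γ
  all_goals rfl

theorem Statement.subset_addTo (s : Statement) (Γ : Set Formula) : Γ ⊆ s.addTo Γ := by
  cases s
  case form a => exact Set.subset_insert a Γ
  all_goals exact subset_rfl

/-- P wins from `J` once O has asserted the formulas in `Γ`, asserting an atom `p` only if
`ax Γ p`. -/
inductive Wins (ax : Set Formula → ℕ → Prop) : Set Formula → Position → Prop
  | defend {Γ χ s δ} : Defends χ s (.form δ) → Wins ax Γ (.asserted δ) →
      Wins ax Γ (.underAttack χ s)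
  | attack {Γ χ s ψ t} : ψ ∈ Γ → Attacks t ψ → (∀ a, t = .form a → Wins ax Γ (.asserted a)) →
      (∀ ε, Defends ψ t (.form ε) → Wins ax (insert ε Γ) (.underAttack χ s)) →
      Wins ax Γ (.underAttack χ s)
  | assert {Γ δ} : (∀ p, δ = .atom p → ax Γ p) →
      (∀ s, Attacks s δ → Wins ax (s.addTo Γ) (.underAttack δ s)) → Wins ax Γ (.asserted δ)

def MayAssertD10 (Γ : Set Formula) (p : ℕ) : Prop := .atom p ∈ Γ

def MayAssertD10prime (Γ : Set Formula) (p : ℕ) : Prop :=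
  .atom p ∈ Γ ∨ .neg (.neg (.atom p)) ∈ Γ

theorem mayAssertD10_mono (Γ Γ' : Set Formula) (p : ℕ) (h : Γ ⊆ Γ') :
    MayAssertD10 Γ p → MayAssertD10 Γ' p := @h _

theorem Attacks.sizeOf_lt {a χ : Formula} (h : Attacks (.form a) χ) : sizeOf a < sizeOf χ := by
  cases h <;> simp only [Formula.imp.sizeOf_spec, Formula.neg.sizeOf_spec] <;> omega

theorem Defends.sizeOf_lt {χ ε : Formula} {s : Statement} (h : Defends χ s (.form ε)) :
    sizeOf ε < sizeOf χ := by
  cases h <;> simp <;> omega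

namespace Wins

variable {ax : Set Formula → ℕ → Prop} {Γ : Set Formula} {χ : Formula} {s : Statement}

theorem mayAssert {δ : Formula} (h : Wins ax Γ (.asserted δ)) : ∀ p, δ = .atom p → ax Γ p := by
  cases h; assumption

theorem mono_ax {ax' : Set Formula → ℕ → Prop} (hax : ∀ Γ p, ax Γ p → ax' Γ p) {J : Position}
    (h : Wins ax Γ J) : Wins ax' Γ J := by
  induction h with
  | defend hD _ ih => exact .defend hD ih
  | attack hψ ht _ _ ihA ihD => exact .attack hψ ht ihA ihD
  | assert hat _ ih => exact .assert (fun p hp => hax _ p (hat p hp)) ih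

theorem mono_ctx (hax : ∀ Γ Γ' p, Γ ⊆ Γ' → ax Γ p → ax Γ' p) {J : Position}
    (h : Wins ax Γ J) {Γ' : Set Formula} (hΓ : Γ ⊆ Γ') : Wins ax Γ' J := by
  induction h generalizing Γ' with
  | defend hD _ ih => exact .defend hD (ih hΓ)
  | attack hψ ht _ _ ihA ihD =>
    exact .attack (hΓ hψ) ht (fun a ha => ihA a ha hΓ)
      (fun ε hε => ihD ε hε (Set.insert_subset_insert hΓ))
  | assert hat _ ih =>
    exact .assert (fun p hp => hax _ _ p hΓ (hat p hp)) (fun s hs => ih s hs (s.addTo_mono hΓ))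

theorem of_mem (hax : ∀ {Γ p}, .atom p ∈ Γ → ax Γ p) {Γ : Set Formula} {a : Formula}
    (h : a ∈ Γ) : Wins ax Γ (.asserted a) := by
  refine .assert (fun p hp => hax (hp ▸ h)) fun s hs => ?_
  refine .attack (s.subset_addTo Γ h) hs (fun b hb => ?_) fun ε hε => ?_
  · subst hb
    have := hs.sizeOf_lt
    exact of_mem hax (Set.mem_insert b Γ)
  · have := hε.sizeOf_lt
    exact .defend hε (of_mem hax (Set.mem_insert ε _))
termination_by sizeOf a

theorem assert_imp {a b : Formula} (h : Wins ax (insert a Γ) (.underAttack (a.imp b) (.form a))) :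
    Wins ax Γ (.asserted (a.imp b)) :=
  .assert (fun _ h => nomatch h) fun _ ht => by cases ht; exact h

theorem imp_intro {a b : Formula} (h : Wins ax (insert a Γ) (.asserted b)) :
    Wins ax Γ (.asserted (a.imp b)) :=
  .assert_imp (.defend (.imp a b) h)

theorem assert_neg {a : Formula} (h : Wins ax (insert a Γ) (.underAttack a.neg (.form a))) :
    Wins ax Γ (.asserted a.neg) :=
  .assert (fun _ h => nomatch h) fun _ ht => by cases ht; exact h

theorem assert_and {a b : Formula} (hl : Wins ax Γ (.underAttack (a.and b) .andL))
    (hr : Wins ax Γ (.underAttack (a.and b) .andR)) : Wins ax Γ (.asserted (a.and b)) :=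
  .assert (fun _ h => nomatch h) fun _ ht => by cases ht <;> assumption

theorem assert_or {a b : Formula} (h : Wins ax Γ (.underAttack (a.or b) .qmark)) :
    Wins ax Γ (.asserted (a.or b)) :=
  .assert (fun _ h => nomatch h) fun _ ht => by cases ht; exact h

theorem attack_imp {a b : Formula} (hmem : a.imp b ∈ Γ) (ha : Wins ax Γ (.asserted a))
    (hb : Wins ax (insert b Γ) (.underAttack χ s)) : Wins ax Γ (.underAttack χ s) :=
  .attack hmem (.imp a b) (fun _ h => by cases h; exact ha) fun _ h => by cases h; exact hb

theorem attack_neg {a : Formula} (hmem : a.neg ∈ Γ) (ha : Wins ax Γ (.asserted a)) :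
    Wins ax Γ (.underAttack χ s) :=
  .attack hmem (.neg a) (fun _ h => by cases h; exact ha) fun _ h => nomatch h

theorem attack_andL {a b : Formula} (hmem : a.and b ∈ Γ)
    (h : Wins ax (insert a Γ) (.underAttack χ s)) : Wins ax Γ (.underAttack χ s) :=
  .attack hmem (.andL a b) (fun _ h => nomatch h) fun _ h => by cases h; exact h

theorem attack_andR {a b : Formula} (hmem : a.and b ∈ Γ)
    (h : Wins ax (insert b Γ) (.underAttack χ s)) : Wins ax Γ (.underAttack χ s) :=
  .attack hmem (.andR a b) (fun _ h => nomatch h) fun _ h => by cases h; exact h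

theorem attack_or {a b : Formula} (hmem : a.or b ∈ Γ) (ha : Wins ax (insert a Γ) (.underAttack χ s))
    (hb : Wins ax (insert b Γ) (.underAttack χ s)) : Wins ax Γ (.underAttack χ s) :=
  .attack hmem (.qmark a b) (fun _ h => nomatch h) fun _ h => by cases h <;> assumption

/-! ### Cut admissibility -/

theorem cut_defense {χ' : Formula} {s' : Statement} (h : Wins ax Γ (.underAttack χ s))
    (hcont : ∀ ε, Defends χ s (.form ε) → ∀ Γ', Γ ⊆ Γ' → Wins ax Γ' (.asserted ε) →
      Wins ax Γ' (.underAttack χ' s')) :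
    Wins ax Γ (.underAttack χ' s') := by
  generalize hJ : Position.underAttack χ s = J at h
  induction h with
  | defend hD hδ => cases hJ; exact hcont _ hD _ subset_rfl hδ
  | attack hψ ht hA _ _ ihD =>
    cases hJ
    exact .attack hψ ht hA fun ε hε =>
      ihD ε hε (fun ε' hε' Γ' hΓ' => hcont ε' hε' Γ' ((Set.subset_insert _ _).trans hΓ')) rfl
  | assert => cases hJ

theorem cut {a : Formula} {Γ Δ : Set Formula} {J : Position} (hd : Wins MayAssertD10 Δ J)
    (hΔ : Δ ⊆ insert a Γ) (ha : Wins MayAssertD10 Γ (.asserted a)) : Wins MayAssertD10 Γ J := by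
  induction hd generalizing Γ with
  | defend hD _ ih => exact .defend hD (ih hΔ ha)
  | @attack Δ χ s ψ t hψ ht _ _ ihA ihD =>
    have hA : ∀ b, t = .form b → Wins MayAssertD10 Γ (.asserted b) := fun b hb => ihA b hb hΔ ha
    have hD : ∀ ε, Defends ψ t (.form ε) → Wins MayAssertD10 (insert ε Γ) (.underAttack χ s) :=
      fun ε hε => ihD ε hε (Set.insert_subset_insert hΔ |>.trans (Set.insert_comm _ _ _).subset)
        (ha.mono_ctx mayAssertD10_mono (Set.subset_insert _ _))
    rcases hΔ hψ with rfl | hψ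
    · -- principal case: P's attack on the cut formula is answered by the strategy `ha`
      obtain _ | _ | ⟨_, hresp⟩ := ha
      have hanswer : Wins MayAssertD10 Γ (.underAttack ψ t) := by
        cases t with
        | form b =>
          have := ht.sizeOf_lt
          exact cut (hresp _ ht) subset_rfl (hA b rfl)
        | _ => exact hresp _ ht
      refine hanswer.cut_defense fun ε hε Γ' hΓ' hε' => ?_
      have := hε.sizeOf_lt
      exact cut ((hD ε hε).mono_ctx mayAssertD10_mono (Set.insert_subset_insert hΓ')) subset_rfl hε'
    · exact .attack hψ ht hA hD
  | @assert Δ δ hat _ ih =>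
    by_cases hδa : δ = a
    · exact hδa ▸ ha
    refine .assert (fun p hp => ?_) fun s hs =>
      ih s hs ?_ (ha.mono_ctx mayAssertD10_mono (s.subset_addTo Γ))
    · rcases hΔ (hat p hp) with h | h
      · exact absurd (hp.trans h) hδa
      · exact h
    · exact (s.addTo_mono hΔ).trans (s.addTo_insert a Γ).subset
termination_by sizeOf a

end Wins

theorem IProv.wins {φ : Formula} (h : IProv φ) : Wins MayAssertD10 ∅ (.asserted φ) := by
  have copy {Γ : Set Formula} {a : Formula} (h : a ∈ Γ := by simp) :
      Wins MayAssertD10 Γ (.asserted a) :=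
    .of_mem (fun h => h) h
  induction h with
  | k a b => exact .imp_intro (.imp_intro copy)
  | s a b c =>
    refine .imp_intro (.imp_intro (.assert_imp ?_))
    refine .attack_imp (a := a) (b := b.imp c) (by simp) copy ?_
    refine .attack_imp (a := a) (b := b) (by simp) copy ?_
    exact .attack_imp (a := b) (b := c) (by simp) copy (.defend (.imp ..) copy)
  | andE1 a b =>
    exact .assert_imp (.attack_andL (a := a) (b := b) (by simp) (.defend (.imp ..) copy))
  | andE2 a b =>
    exact .assert_imp (.attack_andR (a := a) (b := b) (by simp) (.defend (.imp ..) copy))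
  | andI a b =>
    exact .imp_intro (.imp_intro (.assert_and (.defend (.andL ..) copy) (.defend (.andR ..) copy)))
  | orI1 a b => exact .imp_intro (.assert_or (.defend (.orL ..) copy))
  | orI2 a b => exact .imp_intro (.assert_or (.defend (.orR ..) copy))
  | orE a b c =>
    refine .imp_intro (.imp_intro (.assert_imp (.attack_or (a := a) (b := b) (by simp) ?_ ?_)))
    · exact .attack_imp (a := a) (b := c) (by simp) copy (.defend (.imp ..) copy)
    · exact .attack_imp (a := b) (b := c) (by simp) copy (.defend (.imp ..) copy)
  | negI a b =>
    refine .imp_intro (.imp_intro (.assert_neg ?_))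
    refine .attack_imp (a := a) (b := b) (by simp) copy ?_
    refine .attack_imp (a := a) (b := b.neg) (by simp) copy ?_
    exact .attack_neg (a := b) (by simp) copy
  | negE a b => exact .imp_intro (.assert_imp (.attack_neg (a := a) (by simp) copy))
  | mp a b _ _ ihab iha =>
    obtain _ | _ | ⟨_, hresp⟩ := ihab
    have hb : Wins MayAssertD10 ∅ (.underAttack (a.imp b) (.form a)) :=
      (hresp _ (.imp a b)).cut subset_rfl iha
    obtain ⟨hD, hb⟩ | ⟨hψ⟩ := hb
    · cases hD
      exact hb
    · exact absurd hψ (Set.notMem_empty _)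

/-! ### Legal extensions of E′-dialogues -/

@[simp] theorem nextPos_extend (d : Dialogue) (m : Move) :
    nextPos (d.extend m) = nextPos d + 1 := by
  simp [nextPos, Dialogue.extend]

namespace Dialogue

variable {d : Dialogue} {m : Move}

theorem stmtAt_eq_map_moveAt {j : ℕ} (hj : j ≠ 0) :
    d.stmtAt j = (d.moveAt j).map Move.statement := by
  simp [stmtAt, moveAt, hj]

theorem moveAt_extend (j : ℕ) :
    (d.extend m).moveAt j = if j = nextPos d then some m else d.moveAt j := by
  unfold moveAt extend nextPos
  split_ifs <;> simp_all [List.getElem?_append, List.getElem?_singleton]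
  omega

theorem stmtAt_extend (j : ℕ) :
    (d.extend m).stmtAt j = if j = nextPos d then some m.statement else d.stmtAt j := by
  rcases eq_or_ne j 0 with rfl | hj
  · simp [stmtAt, extend, nextPos]
  · rw [stmtAt_eq_map_moveAt hj, stmtAt_eq_map_moveAt hj, moveAt_extend]
    split_ifs <;> rfl

theorem moveAt_lt {j : ℕ} {mv : Move} (h : d.moveAt j = some mv) : j < nextPos d := by
  unfold moveAt at h
  split_ifs at h
  have := (List.getElem?_eq_some_iff.1 h).1
  unfold nextPos
  omega

theorem stmtAt_lt {j : ℕ} {s : Statement} (h : d.stmtAt j = some s) : j < nextPos d := by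
  rcases eq_or_ne j 0 with rfl | hj
  · simp [nextPos]
  · rw [stmtAt_eq_map_moveAt hj, Option.map_eq_some_iff] at h
    obtain ⟨mv, hmv, -⟩ := h
    exact moveAt_lt hmv

@[simp] theorem moveAt_extend_self : (d.extend m).moveAt (nextPos d) = some m := by
  simp [moveAt_extend]

@[simp] theorem stmtAt_extend_self : (d.extend m).stmtAt (nextPos d) = some m.statement := by
  simp [stmtAt_extend]

theorem moveAt_extend_of_lt {j : ℕ} (hj : j < nextPos d) : (d.extend m).moveAt j = d.moveAt j := by
  simp [moveAt_extend, hj.ne]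

theorem stmtAt_extend_of_lt {j : ℕ} (hj : j < nextPos d) : (d.extend m).stmtAt j = d.stmtAt j := by
  simp [stmtAt_extend, hj.ne]

end Dialogue

open Dialogue

theorem particleOK_iff {d : Dialogue} :
    ParticleOK d ↔ ∀ n mv, d.moveAt n = some mv → MoveOK d n mv := by
  refine ⟨fun h n mv hmv => ?_, fun h i mv hmv => h (i + 1) mv (by simpa [moveAt] using hmv)⟩
  unfold moveAt at hmv
  split_ifs at hmv with hn
  simpa [Nat.sub_add_cancel (Nat.pos_of_ne_zero hn)] using h (n - 1) mv hmv

def OAsserted (d : Dialogue) (ψ : Formula) : Prop :=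
  ∃ j, j % 2 = 1 ∧ d.stmtAt j = some (.form ψ)

def IsLatestOpenOAttack (d : Dialogue) (r : ℕ) : Prop :=
  r % 2 = 1 ∧ OpenAt d r (nextPos d) ∧
    ¬ ∃ r', r < r' ∧ r' < nextPos d ∧ r' % 2 = 1 ∧ OpenAt d r' (nextPos d)

section Extension

variable {d : Dialogue} {m : Move}

theorem OAsserted.extend {ψ : Formula} (h : OAsserted d ψ) : OAsserted (d.extend m) ψ :=
  have ⟨j, hj, hjψ⟩ := h
  ⟨j, hj, by rwa [stmtAt_extend_of_lt (stmtAt_lt hjψ)]⟩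

theorem oAsserted_extend_self {ψ : Formula} (hO : nextPos d % 2 = 1) (hm : m.statement = .form ψ) :
    OAsserted (d.extend m) ψ :=
  ⟨nextPos d, hO, by rw [stmtAt_extend_self, hm]⟩

theorem MoveOK.extend {n : ℕ} {mv : Move} (h : MoveOK d n mv) (hn : n ≤ nextPos d) :
    MoveOK (d.extend m) n mv := by
  obtain ⟨hlt, hpar, hatk, hdef⟩ := h
  refine ⟨hlt, hpar, fun ha => ?_, fun ha => ?_⟩
  · rw [stmtAt_extend_of_lt (by omega)]
    exact hatk ha
  · obtain ⟨a, χ, hma, haa, hsa, hD⟩ := hdef ha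
    exact ⟨a, χ, by rwa [moveAt_extend_of_lt (by omega)], haa,
      by rwa [stmtAt_extend_of_lt (stmtAt_lt hsa)], hD⟩

theorem isDefenseOf_extend_of_lt {j r : ℕ} (hj : j < nextPos d) :
    IsDefenseOf (d.extend m) j r ↔ IsDefenseOf d j r := by
  simp only [IsDefenseOf, moveAt_extend_of_lt hj]

theorem openAt_extend {r k : ℕ} (hr : r < nextPos d) (hk : k ≤ nextPos d) :
    OpenAt (d.extend m) r k ↔ OpenAt d r k := by
  have hdef : ∀ j < k, IsDefenseOf (d.extend m) j r ↔ IsDefenseOf d j r :=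
    fun j hj => isDefenseOf_extend_of_lt (by omega)
  simp only [OpenAt, IsAttackPos, moveAt_extend_of_lt hr]
  constructor <;> rintro ⟨hatk, hno⟩ <;>
    exact ⟨hatk, fun ⟨j, hj, hjd⟩ => hno ⟨j, hj, by simpa [hdef j hj] using hjd⟩⟩

theorem OpenAt.lt_nextPos {r k : ℕ} (h : OpenAt d r k) : r < nextPos d :=
  have ⟨_, hmv, _⟩ := h.1
  moveAt_lt hmv

theorem particleOK_extend (hd : ParticleOK d) (hm : MoveOK d (nextPos d) m) :
    ParticleOK (d.extend m) := by
  rw [particleOK_iff] at hd ⊢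
  intro n mv hmv
  rw [moveAt_extend] at hmv
  split_ifs at hmv with hn
  · cases hmv
    exact hn ▸ hm.extend le_rfl
  · exact (hd n mv hmv).extend (moveAt_lt hmv).le

theorem d10prime_extend (hd : D10prime d)
    (hm : ∀ p, m.statement = .form (.atom p) →
      OAsserted d (.atom p) ∨ OAsserted d (.neg (.neg (.atom p)))) :
    D10prime (d.extend m) := by
  intro n p hn hst
  rw [stmtAt_extend] at hst
  split_ifs at hst with hnd
  · subst hnd
    rcases hm p (Option.some_injective _ hst) with ⟨j, hj, hjp⟩ | ⟨j, hj, hjp⟩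
    · exact ⟨j, stmtAt_lt hjp, hj, .inl (by rwa [stmtAt_extend_of_lt (stmtAt_lt hjp)])⟩
    · exact ⟨j, stmtAt_lt hjp, hj, .inr (by rwa [stmtAt_extend_of_lt (stmtAt_lt hjp)])⟩
  · obtain ⟨j, hjn, hj, hjp⟩ := hd n p hn hst
    have hjlt : j < nextPos d := hjn.trans (stmtAt_lt hst)
    exact ⟨j, hjn, hj, by simpa only [stmtAt_extend_of_lt hjlt] using hjp⟩

theorem d11_extend (hd : D11 d)
    (hm : m.isAttack = false → OpenAt d m.ref (nextPos d) ∧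
      ¬ ∃ r', m.ref < r' ∧ r' < nextPos d ∧ r' % 2 = m.ref % 2 ∧ OpenAt d r' (nextPos d)) :
    D11 (d.extend m) := by
  rintro n r ⟨mv, hmv, hmva, rfl⟩
  rw [moveAt_extend] at hmv
  split_ifs at hmv with hn
  · cases hmv
    subst hn
    obtain ⟨hopen, hlatest⟩ := hm hmva
    have hr := hopen.lt_nextPos
    refine ⟨(openAt_extend hr le_rfl).2 hopen, fun ⟨r', hr', hr'n, hpar, hopen'⟩ => ?_⟩
    exact hlatest ⟨r', hr', hr'n, hpar, (openAt_extend hr'n le_rfl).1 hopen'⟩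
  · have hnlt := moveAt_lt hmv
    obtain ⟨hopen, hlatest⟩ := hd n mv.ref ⟨mv, hmv, hmva, rfl⟩
    refine ⟨(openAt_extend hopen.lt_nextPos hnlt.le).2 hopen,
      fun ⟨r', hr', hr'n, hpar, hopen'⟩ => ?_⟩
    exact hlatest ⟨r', hr', hr'n, hpar, (openAt_extend (by omega) hnlt.le).1 hopen'⟩

theorem d12_extend (hd : D12 d) (hm : m.isAttack = false → OpenAt d m.ref (nextPos d)) :
    D12 (d.extend m) := by
  have hnew : ∀ n r, IsDefenseOf (d.extend m) n r →
      n = nextPos d ∧ m.isAttack = false ∧ m.ref = r ∨ n < nextPos d ∧ IsDefenseOf d n r := by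
    rintro n r ⟨mv, hmv, hmva, hmvr⟩
    rw [moveAt_extend] at hmv
    split_ifs at hmv with hn
    · cases hmv
      exact .inl ⟨hn, hmva, hmvr⟩
    · exact .inr ⟨moveAt_lt hmv, mv, hmv, hmva, hmvr⟩
  intro n₁ n₂ r h₁ h₂
  rcases hnew n₁ r h₁ with ⟨rfl, hma, rfl⟩ | ⟨hn₁, h₁⟩
  · rcases hnew n₂ _ h₂ with ⟨rfl, -⟩ | ⟨hn₂, h₂⟩
    · rfl
    · exact absurd ⟨n₂, hn₂, h₂⟩ (hm hma).2
  · rcases hnew n₂ r h₂ with ⟨rfl, hma, rfl⟩ | ⟨hn₂, h₂⟩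
    · exact absurd ⟨n₁, hn₁, h₁⟩ (hm hma).2
    · exact hd n₁ n₂ r h₁ h₂

theorem d13_extend (hd : D13 d) (hm : m.ref % 2 = 1) : D13 (d.extend m) := by
  have hold : ∀ n r, r % 2 = 0 → IsAttackOn (d.extend m) n r → IsAttackOn d n r := by
    rintro n r hr ⟨mv, hmv, hmva, rfl⟩
    rw [moveAt_extend] at hmv
    split_ifs at hmv
    · cases hmv
      omega
    · exact ⟨mv, hmv, hmva, rfl⟩
  exact fun n₁ n₂ r hr h₁ h₂ => hd n₁ n₂ r hr (hold n₁ r hr h₁) (hold n₂ r hr h₂)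

theorem eRule_extend (hd : ERule d) (hP : nextPos d % 2 = 0) : ERule (d.extend m) := by
  intro n mv hn hmv
  rw [moveAt_extend] at hmv
  split_ifs at hmv with hnd
  · omega
  · exact hd n mv hn hmv

theorem Legal.extend_pMove (hd : Legal rulesetEprime d) (hP : nextPos d % 2 = 0)
    (hm : MoveOK d (nextPos d) m)
    (hatom : ∀ p, m.statement = .form (.atom p) →
      OAsserted d (.atom p) ∨ OAsserted d (.neg (.neg (.atom p))))
    (hdef : m.isAttack = false → IsLatestOpenOAttack d m.ref) :
    Legal rulesetEprime (d.extend m) := by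
  obtain ⟨hpart, h10, h11, h12, h13, hE⟩ := hd
  have hodd : m.ref % 2 = 1 := by have := hm.2.1; omega
  refine ⟨particleOK_extend hpart hm, d10prime_extend h10 hatom, d11_extend h11 fun h => ?_,
    d12_extend h12 fun h => (hdef h).2.1, d13_extend h13 hodd, eRule_extend hE hP⟩
  obtain ⟨-, hopen, hlatest⟩ := hdef h
  exact ⟨hopen, by rwa [hodd]⟩

theorem MoveOK.of_extend {n : ℕ} {mv : Move} (hd : ParticleOK (d.extend m))
    (h : MoveOK (d.extend m) n mv) (hn : n ≤ nextPos d) : MoveOK d n mv := by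
  obtain ⟨hlt, hpar, hatk, hdef⟩ := h
  refine ⟨hlt, hpar, fun ha => ?_, fun ha => ?_⟩
  · rw [← stmtAt_extend_of_lt (m := m) (by omega)]
    exact hatk ha
  · obtain ⟨a, χ, hma, haa, hsa, hD⟩ := hdef ha
    have haref := (particleOK_iff.1 hd _ a hma).1
    rw [moveAt_extend_of_lt (by omega)] at hma
    rw [stmtAt_extend_of_lt (by omega)] at hsa
    exact ⟨a, χ, hma, haa, hsa, hD⟩

theorem Legal.oMove (h : Legal rulesetEprime (d.extend m)) (hO : nextPos d % 2 = 1) :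
    m.ref = nextPos d - 1 ∧ MoveOK d (nextPos d) m := by
  obtain ⟨hpart, -, -, -, -, hE⟩ := h
  exact ⟨hE _ m hO moveAt_extend_self,
    (particleOK_iff.1 hpart _ m moveAt_extend_self).of_extend hpart le_rfl⟩

theorem openAt_extend_nextPos {r : ℕ} (hr : r < nextPos d) :
    OpenAt (d.extend m) r (nextPos (d.extend m)) ↔
      OpenAt d r (nextPos d) ∧ ¬ (m.isAttack = false ∧ m.ref = r) := by
  have hdef : (∃ j, j < nextPos d + 1 ∧ IsDefenseOf (d.extend m) j r) ↔
      (∃ j, j < nextPos d ∧ IsDefenseOf d j r) ∨ (m.isAttack = false ∧ m.ref = r) := by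
    constructor
    · rintro ⟨j, hj, hjd⟩
      rcases Nat.lt_succ_iff_lt_or_eq.1 hj with hj | rfl
      · exact .inl ⟨j, hj, (isDefenseOf_extend_of_lt hj).1 hjd⟩
      · obtain ⟨mv, hmv, hmva, hmvr⟩ := hjd
        rw [moveAt_extend_self] at hmv
        cases hmv
        exact .inr ⟨hmva, hmvr⟩
    · rintro (⟨j, hj, hjd⟩ | ⟨hma, hmr⟩)
      · exact ⟨j, by omega, (isDefenseOf_extend_of_lt hj).2 hjd⟩
      · exact ⟨nextPos d, by omega, m, moveAt_extend_self, hma, hmr⟩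
  simp only [OpenAt, IsAttackPos, nextPos_extend, moveAt_extend_of_lt hr, hdef, not_or, and_assoc]

theorem IsLatestOpenOAttack.extend {r : ℕ} (h : IsLatestOpenOAttack d r)
    (hdef : ¬ (m.isAttack = false ∧ m.ref = r)) (hatk : nextPos d % 2 = 1 → m.isAttack = false) :
    IsLatestOpenOAttack (d.extend m) r := by
  obtain ⟨hodd, hopen, hlatest⟩ := h
  refine ⟨hodd, (openAt_extend_nextPos hopen.lt_nextPos).2 ⟨hopen, hdef⟩,
    fun ⟨r', hr', hr'n, hpar, hopen'⟩ => ?_⟩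
  rw [nextPos_extend] at hr'n
  rcases Nat.lt_succ_iff_lt_or_eq.1 hr'n with hr'n | rfl
  · exact hlatest ⟨r', hr', hr'n, hpar, ((openAt_extend_nextPos hr'n).1 hopen').1⟩
  · obtain ⟨⟨mv, hmv, hmva⟩, -⟩ := hopen'
    rw [moveAt_extend_self] at hmv
    cases hmv
    simp [hatk hpar] at hmva

theorem isLatestOpenOAttack_extend_self (hd : ParticleOK d) (hO : nextPos d % 2 = 1)
    (hm : m.isAttack = true) : IsLatestOpenOAttack (d.extend m) (nextPos d) := by
  refine ⟨hO, ⟨⟨m, moveAt_extend_self, hm⟩, fun ⟨j, hj, mv, hmv, hmva, hmvr⟩ => ?_⟩,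
    fun ⟨r', hr', hr'n, _⟩ => by simp at hr'n; omega⟩
  rw [moveAt_extend] at hmv
  split_ifs at hmv with hjn
  · cases hmv
    simp [hm] at hmva
  · have := (particleOK_iff.1 hd j mv hmv).1
    have := moveAt_lt hmv
    omega

end Extension

/-! ### Strategies from derivations -/

structure PState (d : Dialogue) (Γ : Set Formula) (χ : Formula) (s : Statement) : Prop where
  legal : Legal rulesetEprime d
  turn : nextPos d % 2 = 0
  ctx : ∀ ψ ∈ Γ, OAsserted d ψ
  pending : ∃ r a, d.moveAt r = some a ∧ a.statement = s ∧ d.stmtAt a.ref = some (.form χ) ∧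
    IsLatestOpenOAttack d r

structure OState (d : Dialogue) (Γ : Set Formula) (δ : Formula) : Prop where
  legal : Legal rulesetEprime d
  turn : nextPos d % 2 = 1
  ctx : ∀ ψ ∈ Γ, OAsserted d ψ
  last : d.stmtAt (nextPos d - 1) = some (.form δ)

def Winning (Γ : Set Formula) : Position → Prop
  | .underAttack χ s => ∀ d, PState d Γ χ s → PWinning rulesetEprime d
  | .asserted δ => ∀ d, OState d Γ δ →
      -- if P's assertion of `δ` was an attack, O may defend against it instead of attacking `δ`
      (∀ m, LegalExt rulesetEprime d m → m.isAttack = false → PWinning rulesetEprime (d.extend m)) →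
      PWinning rulesetEprime d

theorem Statement.mem_addTo {s : Statement} {Γ : Set Formula} {ψ : Formula} (h : ψ ∈ s.addTo Γ) :
    s = .form ψ ∨ ψ ∈ Γ := by
  cases s with
  | form a => exact (Set.mem_insert_iff.1 h).imp (congrArg _ · |>.symm) id
  | _ => exact .inr h

theorem MayAssertD10prime.oAsserted {Γ : Set Formula} {p : ℕ} {d : Dialogue}
    (h : MayAssertD10prime Γ p) (hctx : ∀ ψ ∈ Γ, OAsserted d ψ) :
    OAsserted d (.atom p) ∨ OAsserted d (.neg (.neg (.atom p))) :=
  h.imp (hctx _) (hctx _)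

theorem Defends.exists_form {χ : Formula} {a s : Statement} (h : Defends χ a s) :
    ∃ ε, s = .form ε := by
  cases h <;> exact ⟨_, rfl⟩

section Strategies

variable {d : Dialogue} {Γ : Set Formula}

theorem pWinning_of_defend {χ δ : Formula} {s : Statement} (hd : PState d Γ χ s)
    (hD : Defends χ s (.form δ)) (hatom : ∀ p, δ = .atom p → MayAssertD10prime Γ p)
    (hwin : Winning Γ (.asserted δ)) : PWinning rulesetEprime d := by
  obtain ⟨r, a, hra, has, hχ, hlatest⟩ := hd.pending
  have haa : a.isAttack = true := by
    obtain ⟨a', ha', ha'a⟩ := hlatest.2.1.1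
    exact (Option.some_injective _ (hra.symm.trans ha')) ▸ ha'a
  have hP := hd.turn
  have hr := hlatest.1
  have hlegal : LegalExt rulesetEprime d ⟨.form δ, false, r⟩ :=
    hd.legal.extend_pMove hP ⟨moveAt_lt hra, by dsimp only; omega, nofun,
      fun _ => ⟨a, χ, hra, haa, hχ, has ▸ hD⟩⟩
      (fun p hp => (hatom p (Statement.form.inj hp)).oAsserted hd.ctx) fun _ => hlatest
  refine .pMove d _ hP hlegal trivial (hwin _ ⟨hlegal, by simp only [nextPos_extend]; omega,
    fun ψ hψ => (hd.ctx ψ hψ).extend, by simp⟩ ?_)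
  intro m' hm' hm'a
  obtain ⟨href, -, -, -, hdef⟩ := hm'.oMove (by simp only [nextPos_extend]; omega)
  obtain ⟨a', -, ha', ha'a, -⟩ := hdef hm'a
  rw [href, nextPos_extend, Nat.add_sub_cancel, moveAt_extend_self] at ha'
  cases ha'
  simp at ha'a

theorem PState.extend_attack_defense {χ ψ : Formula} {s t : Statement} {j : ℕ} {m : Move}
    (hd : PState d Γ χ s) (hjψ : d.stmtAt j = some (.form ψ))
    (hm : LegalExt rulesetEprime (d.extend ⟨t, true, j⟩) m) (hma : m.isAttack = false) :
    ∃ ε, Defends ψ t (.form ε) ∧ PState ((d.extend ⟨t, true, j⟩).extend m) (insert ε Γ) χ s := by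
  have hP := hd.turn
  obtain ⟨href, -, -, -, hdef⟩ := hm.oMove (by simp only [nextPos_extend]; omega)
  obtain ⟨a, χ', ha, -, hχ', hDm⟩ := hdef hma
  simp only [nextPos_extend, Nat.add_sub_cancel] at href
  rw [href, moveAt_extend_self] at ha
  cases ha
  rw [stmtAt_extend_of_lt (stmtAt_lt hjψ), hjψ] at hχ'
  cases hχ'
  obtain ⟨ε, hε⟩ := hDm.exists_form
  rw [hε] at hDm
  obtain ⟨r, a, hra, has, hχ, hlatest⟩ := hd.pending
  have hrlt := moveAt_lt hra
  refine ⟨ε, hDm, hm, by simp only [nextPos_extend]; omega, fun φ hφ => ?_, r, a, ?_, has, ?_,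
    (hlatest.extend (by simp) (by omega)).extend (fun h => by have := hlatest.1; omega)
      fun _ => hma⟩
  · rcases hφ with rfl | hφ
    · exact oAsserted_extend_self (by simp only [nextPos_extend]; omega) hε
    · exact (hd.ctx φ hφ).extend.extend
  · rw [moveAt_extend_of_lt (by simp; omega), moveAt_extend_of_lt hrlt, hra]
  · have := stmtAt_lt hχ
    rw [stmtAt_extend_of_lt (by simp; omega), stmtAt_extend_of_lt this, hχ]

theorem pWinning_of_attack {χ ψ : Formula} {s t : Statement} (hd : PState d Γ χ s) (hψ : ψ ∈ Γ)
    (ht : Attacks t ψ)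
    (hA : ∀ a, t = .form a → (∀ p, a = .atom p → MayAssertD10prime Γ p) ∧ Winning Γ (.asserted a))
    (hD : ∀ ε, Defends ψ t (.form ε) → Winning (insert ε Γ) (.underAttack χ s)) :
    PWinning rulesetEprime d := by
  obtain ⟨j, hj, hjψ⟩ := hd.ctx ψ hψ
  have hP := hd.turn
  have hlegal : LegalExt rulesetEprime d ⟨t, true, j⟩ :=
    hd.legal.extend_pMove hP ⟨stmtAt_lt hjψ, by dsimp only; omega, fun _ => ⟨ψ, hjψ, ht⟩, nofun⟩
      (fun p hp => ((hA _ hp).1 p rfl).oAsserted hd.ctx) nofun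
  have hdefended : ∀ m, LegalExt rulesetEprime (d.extend ⟨t, true, j⟩) m → m.isAttack = false →
      PWinning rulesetEprime ((d.extend ⟨t, true, j⟩).extend m) := fun m hm hma =>
    have ⟨ε, hε, hstate⟩ := hd.extend_attack_defense hjψ hm hma
    hD ε hε _ hstate
  refine .pMove d _ hP hlegal trivial ?_
  cases t with
  | form a =>
    exact (hA a rfl).2 _ ⟨hlegal, by simp only [nextPos_extend]; omega,
      fun φ hφ => (hd.ctx φ hφ).extend, by simp⟩ hdefended
  | _ =>
    refine .oMoves _ (fun h => by simp only [PTurn, nextPos_extend] at h; omega) fun m hm => ?_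
    cases hma : m.isAttack
    · exact hdefended m hm hma
    obtain ⟨href, -, -, hatk, -⟩ := hm.oMove (by simp only [nextPos_extend]; omega)
    obtain ⟨ψ', hψ', -⟩ := hatk hma
    simp [href] at hψ'

theorem winning_asserted {δ : Formula}
    (h : ∀ s, Attacks s δ → Winning (s.addTo Γ) (.underAttack δ s)) :
    Winning Γ (.asserted δ) := by
  intro d hd hdefended
  have hO := hd.turn
  refine .oMoves d (fun h => by simp only [PTurn] at h; omega) fun m hm => ?_
  cases hma : m.isAttack
  · exact hdefended m hm hma
  obtain ⟨href, -, -, hatk, -⟩ := hm.oMove hO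
  obtain ⟨ψ, hψ, hA⟩ := hatk hma
  rw [href, hd.last] at hψ
  cases hψ
  refine h m.statement hA _ ⟨hm, by simp only [nextPos_extend]; omega, fun ψ hψ => ?_,
    nextPos d, m, moveAt_extend_self, rfl, ?_, isLatestOpenOAttack_extend_self hd.legal.1 hO hma⟩
  · rcases Statement.mem_addTo hψ with hs | hψ
    · exact oAsserted_extend_self hO hs
    · exact (hd.ctx ψ hψ).extend
  · rw [href, stmtAt_extend_of_lt (by omega), hd.last]

end Strategies

theorem Wins.winning {Γ : Set Formula} {J : Position} (h : Wins MayAssertD10prime Γ J) :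
    Winning Γ J := by
  induction h with
  | defend hD hδ ih => exact fun d hd => pWinning_of_defend hd hD hδ.mayAssert ih
  | attack hψ ht hA _ ihA ihD =>
    exact fun d hd => pWinning_of_attack hd hψ ht (fun a ha => ⟨(hA a ha).mayAssert, ihA a ha⟩) ihD
  | assert _ _ ih => exact winning_asserted ih

theorem legal_initial {φ : Formula} (hφ : ∀ p, φ ≠ .atom p) : Legal rulesetEprime ⟨φ, []⟩ := by
  have hmove : ∀ n, Dialogue.moveAt ⟨φ, []⟩ n = none := by simp [Dialogue.moveAt]
  refine ⟨nofun, fun n p _ h => ?_, fun _ _ ⟨_, h, _⟩ => ?_, fun _ _ _ ⟨_, h, _⟩ => ?_,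
    fun _ _ _ _ ⟨_, h, _⟩ => ?_, fun _ _ _ h => ?_⟩
  all_goals simp_all [Dialogue.stmtAt]

theorem valid_of_wins {φ : Formula} (h : Wins MayAssertD10prime ∅ (.asserted φ)) :
    valid rulesetEprime φ := by
  have hφ : ∀ p, φ ≠ .atom p := fun p hp => by simpa [MayAssertD10prime] using h.mayAssert p hp
  refine ⟨legal_initial hφ, h.winning _ ⟨legal_initial hφ, rfl, by simp, rfl⟩ fun m hm hma => ?_⟩
  obtain ⟨href, -, -, -, hdef⟩ := hm.oMove rfl
  obtain ⟨_, _, hmv, -⟩ := hdef hma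
  simp [href, nextPos, Dialogue.moveAt] at hmv

theorem IProv.valid_Eprime {φ : Formula} (h : IProv φ) : valid rulesetEprime φ :=
  valid_of_wins (h.wins.mono_ax fun _ _ => .inl)

theorem valid_Eprime_stab (p : ℕ) : valid rulesetEprime (stab p) :=
  valid_of_wins <| .imp_intro <| .assert (fun _ h => h ▸ .inr (by simp)) nofun

/-- The set of E′-valid formulas properly extends intuitionistic logic:
every intuitionistically valid formula is E′-valid, every stability
instance ¬¬p → p is E′-valid, and ¬¬p → p is not intuitionistically
valid. -/
theorem Eprime_properly_extends_IL :
    (∀ φ : Formula, IProv φ → valid rulesetEprime φ) ∧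
    (∀ p : ℕ, valid rulesetEprime (stab p)) ∧
    (∀ p : ℕ, ¬ IProv (stab p)) :=
  ⟨fun _ => IProv.valid_Eprime, valid_Eprime_stab, not_IProv_stab⟩

end LorenzenDialogues
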